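/- Let μ be a locally finite positive Borel measure, let F be a family of dyadic intervals with geometric decay in generations: ∑_{F' ∈ C_F^{(n)}(F)} μ(F') ≤ C_δ 2^{−δn} μ(F) for all n ≥ 0 and F ∈ F, where C_F^{(n)}(F) are the n-th generation F-descendants of F. Let {α(F)}_{F∈F} be nonnegative numbers. Then for p = 4, ∫ (∑_{F∈F} α(F)² 1_F(x))² dμ(x) ≤ C ∑_{F∈F} α(F)⁴ μ(F), with C depending only on C_δ and δ. -/

import Mathlib

open MeasureTheory Set
open scoped ENNReal NNReal

/-- The dyadic interval `[k·2ⁿ, (k+1)·2ⁿ)`. -/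
def dyadicInterval (n k : ℤ) : Set ℝ :=
  Set.Ico ((k : ℝ) * 2 ^ n) (((k : ℝ) + 1) * 2 ^ n)

/-- The `n`-th generation descendants of `q₀` in the tree `F` of dyadic intervals. -/
def dyadicGen (F : Set (ℤ × ℤ)) (q₀ : ℤ × ℤ) (n : ℕ) : Set (ℤ × ℤ) :=
  {q | q ∈ F ∧ dyadicInterval q.1 q.2 ⊆ dyadicInterval q₀.1 q₀.2 ∧
    Set.ncard {q' | q' ∈ F ∧ dyadicInterval q.1 q.2 ⊂ dyadicInterval q'.1 q'.2 ∧
      dyadicInterval q'.1 q'.2 ⊆ dyadicInterval q₀.1 q₀.2} = n}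

/-!
Expanding the square gives `∑_{p,q} α_p² α_q² μ(I_p ∩ I_q)`. Dyadic intervals are nested or
disjoint, so this is at most twice the sum over pairs `I_p ⊆ I_q`, which we group by the
generation `n` of `p` below `q`. In a fixed generation, Cauchy–Schwarz and the decay hypothesis
bound the inner sum by `(C_δ 2^{-δn} μ(I_q))^{1/2} X_{q,n}^{1/2}` with
`X_{q,n} = ∑_{p ∈ gen_n(q)} α_p⁴ μ(I_p)`. The `n`-th generations of distinct `q` are disjoint,
so `∑_q X_{q,n} ≤ ∑_p α_p⁴ μ(I_p)`, and a second Cauchy–Schwarz over `q` bounds the `n`-th layer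
by `(C_δ 2^{-δn})^{1/2} ∑_p α_p⁴ μ(I_p)`. The constant is the sum of this geometric series.
-/

open Function

section Analysis

variable {α ι : Type*}

theorem lintegral_sq_tsum_mul_indicator [MeasurableSpace α] [Countable ι] (μ : Measure α)
    {s : ι → Set α} (hs : ∀ i, MeasurableSet (s i)) (w : ι → ℝ≥0∞) :
    ∫⁻ x, (∑' i, w i * (s i).indicator (fun _ => 1) x) ^ 2 ∂μ
      = ∑' i, ∑' j, w i * w j * μ (s i ∩ s j) := by
  have hsq : ∀ x, (∑' i, w i * (s i).indicator (fun _ => 1) x) ^ 2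
      = ∑' i, ∑' j, w i * w j * (s i ∩ s j).indicator 1 x := fun x => by
    rw [sq, ← ENNReal.tsum_mul_right]
    refine tsum_congr fun i => ?_
    rw [← ENNReal.tsum_mul_left]
    refine tsum_congr fun j => ?_
    rw [inter_indicator_one, Pi.mul_apply, Pi.one_def]
    ring
  have hmeas : ∀ i j, Measurable fun x => w i * w j * (s i ∩ s j).indicator 1 x :=
    fun i j => (measurable_one.indicator ((hs i).inter (hs j))).const_mul _
  simp_rw [hsq]
  rw [lintegral_tsum fun i => (Measurable.tsum (hmeas i)).aemeasurable]
  refine tsum_congr fun i => ?_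
  rw [lintegral_tsum fun j => (hmeas i j).aemeasurable]
  refine tsum_congr fun j => ?_
  rw [lintegral_const_mul _ (measurable_one.indicator ((hs i).inter (hs j))),
    lintegral_indicator_one ((hs i).inter (hs j))]

theorem tsum_tsum_mul_measure_inter_le [MeasurableSpace α] (μ : Measure α) {s : ι → Set α}
    (hs : ∀ i j, s i ⊆ s j ∨ s j ⊆ s i ∨ Disjoint (s i) (s j)) (w : ι → ℝ≥0∞) :
    ∑' i, ∑' j, w i * w j * μ (s i ∩ s j)
      ≤ 2 * ∑' j, w j * ∑' i : {i | s i ⊆ s j}, w i * μ (s i) := by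
  classical
  set u : ι → ι → ℝ≥0∞ := fun i j => if s i ⊆ s j then w i * w j * μ (s i) else 0
  have hu : ∀ j, ∑' i, u i j = w j * ∑' i : {i | s i ⊆ s j}, w i * μ (s i) := fun j => by
    rw [tsum_subtype {i | s i ⊆ s j} fun i => w i * μ (s i), ← ENNReal.tsum_mul_left]
    refine tsum_congr fun i => ?_
    by_cases h : s i ⊆ s j
    · simp only [u, if_pos h, indicator_of_mem (show i ∈ {i | s i ⊆ s j} from h)]
      ring
    · simp [u, h]
  have hpair : ∀ i j, w i * w j * μ (s i ∩ s j) ≤ u i j + u j i := fun i j => by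
    rcases hs i j with h | h | h
    · refine le_add_right ?_
      simp only [u, if_pos h]
      gcongr
      exact inter_subset_left
    · refine le_add_left ?_
      simp only [u, if_pos h, mul_comm (w j) (w i)]
      gcongr
      exact inter_subset_right
    · simp [h.inter_eq]
  calc ∑' i, ∑' j, w i * w j * μ (s i ∩ s j)
      ≤ ∑' i, ∑' j, (u i j + u j i) := by gcongr with i j; exact hpair i j
    _ = 2 * ∑' j, ∑' i, u i j := by
      simp_rw [ENNReal.tsum_add]
      rw [ENNReal.tsum_comm, two_mul]
    _ = 2 * ∑' j, w j * ∑' i : {i | s i ⊆ s j}, w i * μ (s i) := by simp_rw [hu]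

theorem ENNReal.rpow_one_half_pow_two (x : ℝ≥0∞) : (x ^ (1 / 2 : ℝ)) ^ 2 = x := by
  rw [← ENNReal.rpow_natCast, ← ENNReal.rpow_mul]
  norm_num

theorem ENNReal.rpow_one_half_mul_self (x : ℝ≥0∞) : x ^ (1 / 2 : ℝ) * x ^ (1 / 2 : ℝ) = x := by
  rw [← sq, ENNReal.rpow_one_half_pow_two]

theorem ENNReal.tsum_mul_le_sqrt_mul_sqrt (f g : ι → ℝ≥0∞) :
    ∑' i, f i * g i ≤ (∑' i, f i ^ 2) ^ (1 / 2 : ℝ) * (∑' i, g i ^ 2) ^ (1 / 2 : ℝ) := by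
  let : MeasurableSpace ι := ⊤
  have := ENNReal.lintegral_mul_le_Lp_mul_Lq Measure.count Real.HolderConjugate.two_two
    (measurable_from_top (f := f)).aemeasurable (measurable_from_top (f := g)).aemeasurable
  simpa only [Pi.mul_apply, lintegral_count, ENNReal.rpow_two] using this

theorem ENNReal.tsum_mul_le_sqrt_mul_sqrt_weighted (f ν : ι → ℝ≥0∞) :
    ∑' i, f i * ν i ≤ (∑' i, f i ^ 2 * ν i) ^ (1 / 2 : ℝ) * (∑' i, ν i) ^ (1 / 2 : ℝ) :=
  calc ∑' i, f i * ν i = ∑' i, f i * ν i ^ (1 / 2 : ℝ) * ν i ^ (1 / 2 : ℝ) := by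
        simp_rw [mul_assoc, ENNReal.rpow_one_half_mul_self]
    _ ≤ _ := ENNReal.tsum_mul_le_sqrt_mul_sqrt _ _
    _ = _ := by simp_rw [mul_pow, ENNReal.rpow_one_half_pow_two]

theorem ENNReal.tsum_preimage_val_le {s t : Set ι} (f : ι → ℝ≥0∞) :
    ∑' p : ((↑) : s → ι) ⁻¹' t, f p ≤ ∑' p : t, f p :=
  ENNReal.tsum_comp_le_tsum_of_injective (f := fun p : ((↑) : s → ι) ⁻¹' t => (⟨p.1.1, p.2⟩ : t))
    (fun _ _ h => by ext; simpa using h) (fun p : t => f p)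

theorem ENNReal.tsum_tsum_subtype_le_of_pairwise_disjoint {κ : Type*} {t : κ → Set ι}
    (ht : Pairwise (Disjoint on t)) (f : ι → ℝ≥0∞) : ∑' k, ∑' i : t k, f i ≤ ∑' i, f i := by
  rw [← ENNReal.tsum_biUnion fun a _ b _ hab => ht hab]
  exact ENNReal.tsum_comp_le_tsum_of_injective Subtype.val_injective f

theorem tsum_mul_tsum_tsum_le_of_generation_decay (w ν : ι → ℝ≥0∞) (G : ι → ℕ → Set ι)
    (c : ℕ → ℝ≥0∞) (hdisj : ∀ n, Pairwise (Disjoint on fun q => G q n))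
    (hdecay : ∀ q n, ∑' p : G q n, ν p ≤ c n * ν q) :
    ∑' q, w q * ∑' n, ∑' p : G q n, w p * ν p
      ≤ (∑' n, c n ^ (1 / 2 : ℝ)) * ∑' q, w q ^ 2 * ν q := by
  set S := ∑' q, w q ^ 2 * ν q
  set X : ι → ℕ → ℝ≥0∞ := fun q n => ∑' p : G q n, w p ^ 2 * ν p
  have hgen : ∀ q n, ∑' p : G q n, w p * ν p
      ≤ c n ^ (1 / 2 : ℝ) * (ν q ^ (1 / 2 : ℝ) * X q n ^ (1 / 2 : ℝ)) := fun q n =>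
    calc ∑' p : G q n, w p * ν p
        ≤ X q n ^ (1 / 2 : ℝ) * (∑' p : G q n, ν p) ^ (1 / 2 : ℝ) :=
          ENNReal.tsum_mul_le_sqrt_mul_sqrt_weighted _ _
      _ ≤ X q n ^ (1 / 2 : ℝ) * (c n * ν q) ^ (1 / 2 : ℝ) := by gcongr; exact hdecay q n
      _ = _ := by rw [ENNReal.mul_rpow_of_nonneg _ _ (by norm_num)]; ring
  have hlayer : ∀ n, ∑' q, w q * (ν q ^ (1 / 2 : ℝ) * X q n ^ (1 / 2 : ℝ)) ≤ S := fun n =>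
    calc ∑' q, w q * (ν q ^ (1 / 2 : ℝ) * X q n ^ (1 / 2 : ℝ))
        ≤ S ^ (1 / 2 : ℝ) * (∑' q, X q n) ^ (1 / 2 : ℝ) := by
          simp_rw [← mul_assoc]
          refine (ENNReal.tsum_mul_le_sqrt_mul_sqrt _ _).trans_eq ?_
          simp_rw [mul_pow, ENNReal.rpow_one_half_pow_two, S]
      _ ≤ S ^ (1 / 2 : ℝ) * S ^ (1 / 2 : ℝ) := by
          gcongr
          exact ENNReal.tsum_tsum_subtype_le_of_pairwise_disjoint (hdisj n) _
      _ = S := ENNReal.rpow_one_half_mul_self S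
  calc ∑' q, w q * ∑' n, ∑' p : G q n, w p * ν p
      ≤ ∑' q, w q * ∑' n, c n ^ (1 / 2 : ℝ) * (ν q ^ (1 / 2 : ℝ) * X q n ^ (1 / 2 : ℝ)) := by
        gcongr with q n
        exact hgen q n
    _ = ∑' n, c n ^ (1 / 2 : ℝ) * ∑' q, w q * (ν q ^ (1 / 2 : ℝ) * X q n ^ (1 / 2 : ℝ)) := by
        simp_rw [← ENNReal.tsum_mul_left, mul_left_comm (w _)]
        exact ENNReal.tsum_comm
    _ ≤ ∑' n, c n ^ (1 / 2 : ℝ) * S := by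
        gcongr with n
        exact hlayer n
    _ = (∑' n, c n ^ (1 / 2 : ℝ)) * S := ENNReal.tsum_mul_right

theorem tsum_rpow_one_half_geometric_ne_top (C : ℝ≥0) {δ : ℝ} (hδ : 0 < δ) :
    ∑' n : ℕ, ((C : ℝ≥0∞) * 2 ^ (-(δ * n))) ^ (1 / 2 : ℝ) ≠ ⊤ := by
  have hterm : ∀ n : ℕ, ((C : ℝ≥0∞) * 2 ^ (-(δ * n))) ^ (1 / 2 : ℝ)
      = (C : ℝ≥0∞) ^ (1 / 2 : ℝ) * ((2 : ℝ≥0∞) ^ (-(δ / 2))) ^ n := fun n => by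
    rw [ENNReal.mul_rpow_of_nonneg _ _ (by norm_num), ← ENNReal.rpow_mul,
      ← ENNReal.rpow_natCast, ← ENNReal.rpow_mul]
    ring_nf
  simp_rw [hterm]
  rw [ENNReal.tsum_mul_left, ENNReal.tsum_geometric]
  refine ENNReal.mul_ne_top (ENNReal.rpow_ne_top_of_nonneg (by norm_num) ENNReal.coe_ne_top)
    (ENNReal.inv_ne_top.2 (tsub_pos_iff_lt.2 ?_).ne')
  exact ENNReal.rpow_lt_one_of_one_lt_of_neg (by norm_num) (by linarith)

end Analysis

section DyadicInterval

variable {n m k j : ℤ}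

theorem mem_dyadicInterval_iff {x : ℝ} : x ∈ dyadicInterval n k ↔ ⌊x / 2 ^ n⌋ = k := by
  rw [Int.floor_eq_iff, dyadicInterval, mem_Ico, le_div_iff₀ (by positivity),
    div_lt_iff₀ (by positivity)]

theorem floor_div_two_zpow_of_le (h : n ≤ m) (x : ℝ) :
    ⌊x / 2 ^ m⌋ = ⌊x / 2 ^ n⌋ / 2 ^ (m - n).toNat := by
  have hm : (2 : ℝ) ^ m = 2 ^ n * ((2 ^ (m - n).toNat : ℕ) : ℝ) := by
    rw [Nat.cast_pow, Nat.cast_ofNat, ← zpow_natCast, ← zpow_add₀ two_ne_zero,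
      Int.toNat_of_nonneg (by omega), add_sub_cancel]
  rw [hm, ← div_div, Int.floor_div_natCast]
  push_cast
  rfl

theorem left_mem_dyadicInterval (n k : ℤ) : (k : ℝ) * 2 ^ n ∈ dyadicInterval n k :=
  left_mem_Ico.2 (by gcongr; linarith)

theorem volume_dyadicInterval (n k : ℤ) : volume (dyadicInterval n k) = ENNReal.ofReal (2 ^ n) := by
  rw [dyadicInterval, Real.volume_Ico]
  ring_nf

theorem le_of_dyadicInterval_subset (h : dyadicInterval n k ⊆ dyadicInterval m j) : n ≤ m := by
  have hvol := measure_mono (μ := volume) h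
  rw [volume_dyadicInterval, volume_dyadicInterval,
    ENNReal.ofReal_le_ofReal_iff (by positivity)] at hvol
  exact (zpow_le_zpow_iff_right₀ one_lt_two).1 hvol

-- `ℤ`-division by a positive number rounds down: `k / 2 ^ (m - n)` indexes the scale-`m` ancestor.
theorem dyadicInterval_subset_iff :
    dyadicInterval n k ⊆ dyadicInterval m j ↔ n ≤ m ∧ k / 2 ^ (m - n).toNat = j := by
  constructor
  · intro h
    have hnm := le_of_dyadicInterval_subset h
    have hleft := h (left_mem_dyadicInterval n k)
    rw [mem_dyadicInterval_iff, floor_div_two_zpow_of_le hnm,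
      mem_dyadicInterval_iff.1 (left_mem_dyadicInterval n k)] at hleft
    exact ⟨hnm, hleft⟩
  · rintro ⟨hnm, rfl⟩ x hx
    rw [mem_dyadicInterval_iff] at hx ⊢
    rw [floor_div_two_zpow_of_le hnm, hx]

theorem dyadicInterval_subset_of_le {x : ℝ} (h : n ≤ m) (hxn : x ∈ dyadicInterval n k)
    (hxm : x ∈ dyadicInterval m j) : dyadicInterval n k ⊆ dyadicInterval m j := by
  rw [mem_dyadicInterval_iff] at hxn hxm
  rw [dyadicInterval_subset_iff, ← hxn, ← hxm, floor_div_two_zpow_of_le h]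
  exact ⟨h, rfl⟩

theorem dyadicInterval_subset_or_subset_or_disjoint (n k m j : ℤ) :
    dyadicInterval n k ⊆ dyadicInterval m j ∨ dyadicInterval m j ⊆ dyadicInterval n k ∨
      Disjoint (dyadicInterval n k) (dyadicInterval m j) := by
  by_cases hdisj : Disjoint (dyadicInterval n k) (dyadicInterval m j)
  · exact .inr (.inr hdisj)
  obtain ⟨x, hxn, hxm⟩ := not_disjoint_iff.1 hdisj
  rcases le_total n m with h | h
  · exact .inl (dyadicInterval_subset_of_le h hxn hxm)
  · exact .inr (.inl (dyadicInterval_subset_of_le h hxm hxn))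

end DyadicInterval

local notation:max "𝓘" q:max => dyadicInterval (Prod.fst q) (Prod.snd q)

theorem dyadicInterval_injective : Injective fun q : ℤ × ℤ => 𝓘 q := by
  rintro ⟨n, k⟩ ⟨m, j⟩ h
  obtain ⟨hnm, hkj⟩ := dyadicInterval_subset_iff.1 h.le
  obtain ⟨hmn, -⟩ := dyadicInterval_subset_iff.1 h.ge
  obtain rfl : n = m := le_antisymm hnm hmn
  simpa using hkj

theorem subset_or_subset_of_dyadicInterval_subset {p a b : ℤ × ℤ} (ha : 𝓘 p ⊆ 𝓘 a)
    (hb : 𝓘 p ⊆ 𝓘 b) : 𝓘 a ⊆ 𝓘 b ∨ 𝓘 b ⊆ 𝓘 a := by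
  refine (dyadicInterval_subset_or_subset_or_disjoint a.1 a.2 b.1 b.2).imp_right
    (Or.resolve_right · fun hdisj => ?_)
  exact hdisj.ne_of_mem (ha (left_mem_dyadicInterval p.1 p.2))
    (hb (left_mem_dyadicInterval p.1 p.2)) rfl

theorem finite_dyadicInterval_between (p r : ℤ × ℤ) : {q | 𝓘 p ⊆ 𝓘 q ∧ 𝓘 q ⊆ 𝓘 r}.Finite := by
  refine ((finite_Icc p.1 r.1).image fun m => (m, p.2 / 2 ^ (m - p.1).toNat)).subset ?_
  rintro q ⟨hp, hr⟩
  obtain ⟨hpq, hq⟩ := dyadicInterval_subset_iff.1 hp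
  exact ⟨q.1, ⟨hpq, le_of_dyadicInterval_subset hr⟩, Prod.ext rfl hq⟩

theorem ncard_dyadicInterval_between_lt {F : Set (ℤ × ℤ)} {p a b : ℤ × ℤ} (hb : b ∈ F)
    (hpa : 𝓘 p ⊆ 𝓘 a) (hab : 𝓘 a ⊂ 𝓘 b) :
    {q | q ∈ F ∧ 𝓘 p ⊂ 𝓘 q ∧ 𝓘 q ⊆ 𝓘 a}.ncard < {q | q ∈ F ∧ 𝓘 p ⊂ 𝓘 q ∧ 𝓘 q ⊆ 𝓘 b}.ncard := by
  refine ncard_lt_ncard ⟨fun q hq => ⟨hq.1, hq.2.1, hq.2.2.trans hab.subset⟩, fun h => ?_⟩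
    ((finite_dyadicInterval_between p b).subset fun q hq => ⟨hq.2.1.subset, hq.2.2⟩)
  exact hab.not_subset (h ⟨hb, hpa.trans_ssubset hab, subset_rfl⟩).2.2

theorem disjoint_dyadicGen {F : Set (ℤ × ℤ)} {a b : ℤ × ℤ} (ha : a ∈ F) (hb : b ∈ F) (hab : a ≠ b)
    (n : ℕ) : Disjoint (dyadicGen F a n) (dyadicGen F b n) := by
  rw [Set.disjoint_left]
  rintro p ⟨-, hpa, rfl⟩ ⟨-, hpb, hn⟩
  have hne : 𝓘 a ≠ 𝓘 b := dyadicInterval_injective.ne hab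
  rcases subset_or_subset_of_dyadicInterval_subset hpa hpb with h | h
  · exact (ncard_dyadicInterval_between_lt hb hpa (h.ssubset_of_ne hne)).ne hn.symm
  · exact (ncard_dyadicInterval_between_lt ha hpb (h.ssubset_of_ne hne.symm)).ne hn

theorem pairwise_disjoint_preimage_dyadicGen (F : Set (ℤ × ℤ)) (n : ℕ) :
    Pairwise (Disjoint on fun q : F => ((↑) : F → ℤ × ℤ) ⁻¹' dyadicGen F q.1 n) :=
  fun a b hab => (disjoint_dyadicGen a.2 b.2 (Subtype.coe_ne_coe.2 hab) n).preimage _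

theorem subset_iUnion_preimage_dyadicGen (F : Set (ℤ × ℤ)) (q : F) :
    {p : F | 𝓘 p.1 ⊆ 𝓘 q.1} ⊆ ⋃ n, ((↑) : F → ℤ × ℤ) ⁻¹' dyadicGen F q.1 n :=
  fun p hp => mem_iUnion.2 ⟨_, p.2, hp, rfl⟩

/-- If the family `F` of dyadic intervals has geometric decay in generations with
constants `C_δ, δ`, then for any nonnegative `α(F)` one has the `p = 4` embedding
`∫ (∑_F α(F)² 1_F)² dμ ≤ C ∑_F α(F)⁴ μ(F)` with `C` depending only on `C_δ, δ`. -/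
theorem stmt17 (Cδ : ℝ≥0) (δ : ℝ) (hδ : 0 < δ) :
    ∃ C : ℝ≥0∞, C ≠ ⊤ ∧
      ∀ (μ : Measure ℝ), IsLocallyFiniteMeasure μ →
        ∀ (F : Set (ℤ × ℤ)) (α : ℤ × ℤ → ℝ≥0∞),
          (∀ q₀ ∈ F, ∀ n : ℕ,
            ∑' q : dyadicGen F q₀ n, μ (dyadicInterval q.1.1 q.1.2)
              ≤ (Cδ : ℝ≥0∞) * (2 : ℝ≥0∞) ^ (-(δ * (n : ℝ))) *
                  μ (dyadicInterval q₀.1 q₀.2)) →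
          ∫⁻ x,
              (∑' q : F,
                (α q.1) ^ 2 *
                  (dyadicInterval q.1.1 q.1.2).indicator (fun _ => (1 : ℝ≥0∞)) x) ^ 2 ∂μ
            ≤ C * ∑' q : F, (α q.1) ^ 4 * μ (dyadicInterval q.1.1 q.1.2) := by
  refine ⟨2 * ∑' n : ℕ, ((Cδ : ℝ≥0∞) * 2 ^ (-(δ * n))) ^ (1 / 2 : ℝ),
    ENNReal.mul_ne_top ENNReal.ofNat_ne_top (tsum_rpow_one_half_geometric_ne_top Cδ hδ), ?_⟩
  intro μ _ F α hF
  have hdecay : ∀ (q : F) (n : ℕ), ∑' p : ((↑) : F → ℤ × ℤ) ⁻¹' dyadicGen F q n, μ (𝓘 p.1.1)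
      ≤ Cδ * 2 ^ (-(δ * n)) * μ (𝓘 q.1) := fun q n =>
    (ENNReal.tsum_preimage_val_le (fun p => μ (𝓘 p))).trans (hF q q.2 n)
  calc _ = ∑' p : F, ∑' q : F, α p ^ 2 * α q ^ 2 * μ (𝓘 p.1 ∩ 𝓘 q.1) :=
        lintegral_sq_tsum_mul_indicator μ (fun _ => measurableSet_Ico) _
    _ ≤ 2 * ∑' q : F, α q ^ 2 * ∑' p : {p : F | 𝓘 p.1 ⊆ 𝓘 q.1}, α p ^ 2 * μ (𝓘 p.1.1) :=
        tsum_tsum_mul_measure_inter_le μ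
          (fun p q => dyadicInterval_subset_or_subset_or_disjoint _ _ _ _) _
    _ ≤ 2 * ∑' q : F, α q ^ 2 *
          ∑' n, ∑' p : ((↑) : F → ℤ × ℤ) ⁻¹' dyadicGen F q n, α p ^ 2 * μ (𝓘 p.1.1) := by
        gcongr with q
        let f : F → ℝ≥0∞ := fun p => α p ^ 2 * μ (𝓘 p.1)
        exact (ENNReal.tsum_mono_subtype f (subset_iUnion_preimage_dyadicGen F q)).trans
          (ENNReal.tsum_iUnion_le_tsum f _)
    _ ≤ 2 * ((∑' n : ℕ, ((Cδ : ℝ≥0∞) * 2 ^ (-(δ * n))) ^ (1 / 2 : ℝ)) *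
          ∑' q : F, (α q ^ 2) ^ 2 * μ (𝓘 q.1)) := by
        gcongr
        exact tsum_mul_tsum_tsum_le_of_generation_decay _ _ _ _
          (pairwise_disjoint_preimage_dyadicGen F) hdecay
    _ = _ := by simp_rw [← pow_mul]; ring
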